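/- For the path P_n and the cycle C_n: b_D(P_3) = 2, b_D(P_4) = 1, and b_D(P_n) = 2 for every n ≥ 5; moreover b_D(C_n) = 1 for n ∈ {3, 4, 5} and b_D(C_n) = 3 for every n ≥ 6. -/

import Mathlib

open SimpleGraph

/-- The distinguishing number of a graph: the least `d` such that there is a vertex
labeling with `d` labels preserved only by the trivial automorphism. -/
noncomputable def distNum {V : Type*} (G : SimpleGraph V) : ℕ :=
  sInf {d : ℕ | ∃ f : V → Fin d, ∀ φ : G ≃g G, (∀ x, f (φ x) = f x) → ∀ x, φ x = x}

/-- The distinguishing stability of a graph: the minimum cardinality of a proper subset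
`S` of the vertex set whose removal changes the distinguishing number. -/
noncomputable def stD {V : Type*} (G : SimpleGraph V) : ℕ :=
  sInf {k : ℕ | ∃ S : Set V, S ≠ Set.univ ∧ S.ncard = k ∧
    distNum (G.induce Sᶜ) ≠ distNum G}

/-- The distinguishing bondage number of a graph: the minimum cardinality of a set
of edges whose removal changes the distinguishing number. -/
noncomputable def bD {V : Type*} (G : SimpleGraph V) : ℕ :=
  sInf {k : ℕ | ∃ F : Set (Sym2 V), F ⊆ G.edgeSet ∧ F.ncard = k ∧
    distNum (G.deleteEdges F) ≠ distNum G}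

set_option linter.unusedSectionVars false

section generic
variable {V : Type*} [Fintype V] [DecidableEq V] (G : SimpleGraph V)

def DSet : Set ℕ := {d : ℕ | ∃ f : V → Fin d, ∀ φ : G ≃g G, (∀ x, f (φ x) = f x) → ∀ x, φ x = x}

lemma distNum_def : distNum G = sInf (DSet G) := rfl

lemma card_mem_DSet : Fintype.card V ∈ DSet G := by
  refine ⟨fun x => (Fintype.equivFin V) x, fun φ h x => ?_⟩
  have := h x
  exact (Fintype.equivFin V).injective this

lemma DSet_nonempty : (DSet G).Nonempty := ⟨_, card_mem_DSet G⟩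

lemma distNum_mem : distNum G ∈ DSet G := Nat.sInf_mem (DSet_nonempty G)

lemma distNum_eq_of (v : ℕ) (h1 : v ∈ DSet G) (h2 : ∀ d < v, d ∉ DSet G) : distNum G = v := by
  refine le_antisymm (Nat.sInf_le h1) ?_
  by_contra h
  exact h2 _ (lt_of_not_ge h) (distNum_mem G)

/-- transfer: rigidity over isos ↔ rigidity over adjacency-preserving permutations -/
lemma mem_DSet_iff (d : ℕ) : d ∈ DSet G ↔
    ∃ f : V → Fin d, ∀ σ : Equiv.Perm V, (∀ a b, G.Adj (σ a) (σ b) ↔ G.Adj a b) →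
      (∀ x, f (σ x) = f x) → ∀ x, σ x = x := by
  constructor
  · rintro ⟨f, hf⟩
    exact ⟨f, fun σ hσ => hf ⟨σ, hσ _ _⟩⟩
  · rintro ⟨f, hf⟩
    exact ⟨f, fun φ => hf φ.toEquiv fun a b => φ.map_adj_iff⟩

lemma zero_not_mem_DSet [Nonempty V] : 0 ∉ DSet G := by
  rintro ⟨f, -⟩
  exact (f (Classical.arbitrary V)).elim0

lemma one_not_mem_DSet (σ : Equiv.Perm V) (hσ : ∀ a b, G.Adj (σ a) (σ b) ↔ G.Adj a b)
    (x : V) (hx : σ x ≠ x) : 1 ∉ DSet G := by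
  rw [mem_DSet_iff]
  rintro ⟨f, hf⟩
  exact hx (hf σ hσ (fun y => Subsingleton.elim _ _) x)

lemma distNum_eq_two (f : V → Fin 2)
    (hf : ∀ σ : Equiv.Perm V, (∀ a b, G.Adj (σ a) (σ b) ↔ G.Adj a b) →
      (∀ x, f (σ x) = f x) → ∀ x, σ x = x)
    (σ : Equiv.Perm V) (hσ : ∀ a b, G.Adj (σ a) (σ b) ↔ G.Adj a b)
    (x : V) (hx : σ x ≠ x) [Nonempty V] : distNum G = 2 := by
  refine distNum_eq_of G 2 ((mem_DSet_iff G 2).2 ⟨f, hf⟩) ?_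
  intro d hd
  interval_cases d
  · exact zero_not_mem_DSet G
  · exact one_not_mem_DSet G σ hσ x hx

lemma distNum_ne_two
    (h : ∀ f : V → Fin 2, ∃ σ : Equiv.Perm V, (∀ a b, G.Adj (σ a) (σ b) ↔ G.Adj a b) ∧
      (∀ x, f (σ x) = f x) ∧ ∃ x, σ x ≠ x) : distNum G ≠ 2 := by
  intro hcontra
  have hmem := distNum_mem G
  rw [hcontra, mem_DSet_iff] at hmem
  obtain ⟨f, hf⟩ := hmem
  obtain ⟨σ, h1, h2, x, h3⟩ := h f
  exact h3 (hf σ h1 h2 x)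

def TSet : Set ℕ := {k : ℕ | ∃ F : Set (Sym2 V), F ⊆ G.edgeSet ∧ F.ncard = k ∧
    distNum (G.deleteEdges F) ≠ distNum G}

lemma bD_def : bD G = sInf (TSet G) := rfl

lemma zero_not_mem_TSet : 0 ∉ TSet G := by
  rintro ⟨F, hF, hcard, hne⟩
  have : F = ∅ := by
    have hfin : F.Finite := Set.toFinite F
    rwa [Set.ncard_eq_zero hfin] at hcard
  subst this
  rw [SimpleGraph.deleteEdges_empty] at hne
  exact hne rfl

lemma bD_eq_of (v : ℕ) (h1 : v ∈ TSet G) (h2 : ∀ d < v, d ∉ TSet G) : bD G = v := by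
  refine le_antisymm (Nat.sInf_le h1) ?_
  by_contra h
  exact h2 _ (lt_of_not_ge h) (Nat.sInf_mem ⟨v, h1⟩)

end generic
set_option linter.unusedSectionVars false
open Fin.NatCast Fin.CommRing

def arcGraph (n : ℕ) [NeZero n] (E : Finset (Fin n)) : SimpleGraph (Fin n) where
  Adj x y := x ≠ y ∧ ((x ∈ E ∧ y = x + 1) ∨ (y ∈ E ∧ x = y + 1))
  symm := ⟨by
    intro x y ⟨h1, h2⟩
    exact ⟨h1.symm, h2.symm⟩⟩
  loopless := ⟨fun x h => h.1 rfl⟩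

instance arcDec (n : ℕ) [NeZero n] (E : Finset (Fin n)) : DecidableRel (arcGraph n E).Adj :=
  fun x y => by unfold arcGraph; exact instDecidableAnd

lemma arc_adj {n : ℕ} [NeZero n] {E : Finset (Fin n)} {x y : Fin n} :
    (arcGraph n E).Adj x y ↔ x ≠ y ∧ ((x ∈ E ∧ y = x + 1) ∨ (y ∈ E ∧ x = y + 1)) := Iff.rfl

-- cast helpers
lemma fin_cast_val {n : ℕ} [NeZero n] (k : ℕ) (hk : k < n) : ((k : Fin n) : ℕ) = k := by
  simp [Fin.val_natCast, Nat.mod_eq_of_lt hk]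

lemma fin_cast_inj {n : ℕ} [NeZero n] {k l : ℕ} (hk : k < n) (hl : l < n)
    (h : (k : Fin n) = (l : Fin n)) : k = l := by
  have := congrArg Fin.val h
  rwa [fin_cast_val k hk, fin_cast_val l hl] at this

lemma fin_two_ne_zero {n : ℕ} [NeZero n] (h : 3 ≤ n) : (2 : Fin n) ≠ 0 := by
  have : ((2:ℕ) : Fin n) ≠ ((0:ℕ) : Fin n) := fun hc => by
    have := fin_cast_inj (by omega) (by omega) hc; omega
  simpa using this

-- neighbor structure
lemma arc_nbr {n : ℕ} [NeZero n] {E : Finset (Fin n)} {x y : Fin n}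
    (h : (arcGraph n E).Adj x y) : (x ∈ E ∧ y = x + 1) ∨ (x - 1 ∈ E ∧ y = x - 1) := by
  rcases h.2 with ⟨h1, h2⟩ | ⟨h1, h2⟩
  · exact Or.inl ⟨h1, h2⟩
  · subst h2; exact Or.inr ⟨by simpa using h1, by ring⟩

section engine
variable {n : ℕ} [NeZero n] {E : Finset (Fin n)}

lemma self_ne_add_one (hn : 3 ≤ n) (x : Fin n) : x ≠ x + 1 := by
  intro h
  have h1 : (0 : Fin n) = 1 := by
    have := congrArg (· - x) h
    simpa using this
  have : ((0:ℕ) : Fin n) = ((1:ℕ) : Fin n) := by simpa using h1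
  have := fin_cast_inj (by omega) (by omega) this
  omega

lemma adj_self_add_one (hn : 3 ≤ n) {x : Fin n} (hx : x ∈ E) :
    (arcGraph n E).Adj x (x + 1) := ⟨self_ne_add_one hn x, Or.inl ⟨hx, rfl⟩⟩

variable {σ : Equiv.Perm (Fin n)}
  (hσ : ∀ a b, (arcGraph n E).Adj (σ a) (σ b) ↔ (arcGraph n E).Adj a b)

include hσ

lemma adj_image {a b : Fin n} (h : (arcGraph n E).Adj a b) :
    (arcGraph n E).Adj (σ a) (σ b) := (hσ a b).2 h

/-- Endpoint step: if `σ s = t` with `t` a left endpoint and `s` has a right edge,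
then `σ (s+1) = t+1` and `t` has a right edge. -/
lemma emap (hn : 3 ≤ n) {s t : Fin n} (h0 : σ s = t) (ht : t - 1 ∉ E) (hs : s ∈ E) :
    σ (s + 1) = t + 1 ∧ t ∈ E := by
  have h := adj_image hσ (adj_self_add_one hn hs)
  rw [h0] at h
  rcases arc_nbr h with ⟨h1, h2⟩ | ⟨h1, h2⟩
  · exact ⟨h2, h1⟩
  · exact absurd h1 ht

/-- Main propagation: two consecutive anchors propagate along edges. -/
lemma gmap (hn : 3 ≤ n) {s t : Fin n} (h0 : σ s = t) (h1 : σ (s + 1) = t + 1) :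
    ∀ j : ℕ, (∀ k : ℕ, k < j + 1 → s + (k : Fin n) ∈ E) →
      σ (s + (j : Fin n)) = t + (j : Fin n) ∧
      σ (s + ((j+1 : ℕ) : Fin n)) = t + ((j+1 : ℕ) : Fin n) ∧
      (∀ k : ℕ, 1 ≤ k → k ≤ j → t + (k : Fin n) ∈ E) := by
  intro j
  induction j with
  | zero =>
    intro _
    refine ⟨by simpa using h0, by push_cast; simpa using h1, by omega⟩
  | succ j ih =>
    intro hE
    obtain ⟨ha, hb, hc⟩ := ih (fun k hk => hE k (by omega))
    have hsj : s + ((j+1 : ℕ) : Fin n) ∈ E := hE (j+1) (by omega)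
    have hadj := adj_image hσ (adj_self_add_one hn hsj)
    rw [hb] at hadj
    rcases arc_nbr hadj with ⟨hx, hy⟩ | ⟨hx, hy⟩
    · refine ⟨hb, ?_, ?_⟩
      · rw [show (((j+1+1:ℕ)) : Fin n) = ((j+1:ℕ):Fin n) + 1 by push_cast; ring, ← add_assoc, hy]
        push_cast; ring
      · intro k hk1 hk2
        rcases Nat.lt_or_ge k (j+1) with h | h
        · exact hc k hk1 (by omega)
        · have : k = j + 1 := by omega
          subst this; exact hx
    · exfalso
      have hyy : t + ((j+1:ℕ) : Fin n) - 1 = t + (j : Fin n) := by push_cast; ring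
      rw [hyy] at hy
      have : σ (s + ((j+1:ℕ):Fin n) + 1) = σ (s + (j : Fin n)) := by rw [hy, ha]
      have heq := σ.injective this
      have h2 : (2 : Fin n) = 0 := by push_cast at heq; linear_combination heq
      exact fin_two_ne_zero hn h2

/-- Identity propagation along an arc anchored at its left endpoint. -/
lemma compid (hn : 3 ≤ n) {s : Fin n} (h0 : σ s = s) (hl : s - 1 ∉ E) {a : ℕ}
    (hE : ∀ k : ℕ, k + 1 < a → s + (k : Fin n) ∈ E) :
    ∀ j : ℕ, j < a → σ (s + (j : Fin n)) = s + (j : Fin n) := by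
  intro j hj
  rcases Nat.eq_zero_or_pos j with h | h
  · subst h; simpa using h0
  · have hs : s ∈ E := by simpa using hE 0 (by omega)
    obtain ⟨h1, -⟩ := emap hσ hn h0 hl hs
    have := (gmap hσ hn h0 h1 (j - 1) (fun k hk => hE k (by omega))).2.1
    rwa [show j - 1 + 1 = j by omega] at this

omit hσ

/-- Reversal of a maximal arc is an adjacency-preserving involution. -/
lemma arcrev (hn : 3 ≤ n) {s : Fin n} {len : ℕ} (hlen2 : 2 ≤ len) (hlenn : len ≤ n)
    (hl : s - 1 ∉ E) (hr : s + ((len - 1 : ℕ) : Fin n) ∉ E)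
    (hE : ∀ k : ℕ, k + 1 < len → s + (k : Fin n) ∈ E) :
    ∃ ρ : Equiv.Perm (Fin n),
      (∀ a b, (arcGraph n E).Adj (ρ a) (ρ b) ↔ (arcGraph n E).Adj a b) ∧ ρ s ≠ s := by
  classical
  set c : Fin n := s + s + ((len - 1 : ℕ) : Fin n) with hc
  set g : Fin n → Fin n := fun x => if ∃ k : ℕ, k < len ∧ x = s + (k : Fin n) then c - x else x
    with hg
  have harc : ∀ k : ℕ, k < len → g (s + (k : Fin n)) = s + ((len - 1 - k : ℕ) : Fin n) := by
    intro k hk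
    have : ∃ k' : ℕ, k' < len ∧ s + (k : Fin n) = s + (k' : Fin n) := ⟨k, hk, rfl⟩
    rw [hg]; simp only [this, if_pos]
    have : ((len - 1 - k : ℕ) : Fin n) = ((len - 1 : ℕ) : Fin n) - (k : Fin n) := by
      have : len - 1 - k + k = len - 1 := by omega
      have h2 : (((len - 1 - k : ℕ) : Fin n)) + (k : Fin n) = ((len - 1 : ℕ) : Fin n) := by
        rw [← Nat.cast_add, this]
      linear_combination h2
    rw [this, hc]; ring
  have hinv : Function.Involutive g := by
    intro x
    by_cases hx : ∃ k : ℕ, k < len ∧ x = s + (k : Fin n)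
    · obtain ⟨k, hk, rfl⟩ := hx
      rw [harc k hk, harc (len - 1 - k) (by omega)]
      congr 1
      congr 1
      omega
    · simp only [hg, hx, if_neg, not_false_iff]
  set ρ : Equiv.Perm (Fin n) := hinv.toPerm with hρ
  have hρx : ∀ x, ρ x = g x := fun x => rfl
  -- one-directional adjacency preservation
  have key : ∀ x y : Fin n, (arcGraph n E).Adj x y → (arcGraph n E).Adj (g x) (g y) := by
    have main : ∀ x : Fin n, x ∈ E → (arcGraph n E).Adj (g x) (g (x + 1)) := by
      intro x hxE
      by_cases hx : ∃ k : ℕ, k < len ∧ x = s + (k : Fin n)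
      · obtain ⟨k, hk, rfl⟩ := hx
        have hklt : k + 1 < len := by
          rcases Nat.lt_or_ge (k+1) len with h | h
          · exact h
          · exfalso
            have : k = len - 1 := by omega
            subst this
            exact hr hxE
        have hx1 : s + (k : Fin n) + 1 = s + ((k+1 : ℕ) : Fin n) := by push_cast; ring
        rw [hx1, harc k hk, harc (k+1) hklt]
        have e1 : len - 1 - k = (len - 1 - (k+1)) + 1 := by omega
        constructor
        · rw [e1]
          intro hcon
          have : ((len - 1 - (k+1) + 1 : ℕ) : Fin n) = ((len - 1 - (k+1) : ℕ) : Fin n) := by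
            have := congrArg (· - s) hcon
            simpa using this.symm
          push_cast at this
          have h2 : (1 : Fin n) = 0 := by linear_combination this
          have := fin_cast_inj (n := n) (k := 1) (l := 0) (by omega) (by omega) (by simpa using h2)
          omega
        · refine Or.inr ⟨hE _ (by omega), ?_⟩
          rw [e1]; push_cast; ring
      · have hy : ¬ ∃ k : ℕ, k < len ∧ x + 1 = s + (k : Fin n) := by
          rintro ⟨k, hk, hkx⟩
          rcases Nat.eq_zero_or_pos k with h | h
          · subst h
            simp only [Nat.cast_zero, add_zero] at hkx
            apply hl
            have : x = s - 1 := by linear_combination hkx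
            rwa [← this]
          · apply hx
            refine ⟨k - 1, by omega, ?_⟩
            have : ((k : ℕ) : Fin n) = ((k - 1 : ℕ) : Fin n) + 1 := by
              rw [show k = (k-1)+1 by omega]; push_cast; ring
            rw [this] at hkx
            have : x = s + ((k-1 : ℕ) : Fin n) := by linear_combination hkx
            exact this
        have g1 : g x = x := by rw [hg]; simp only [hx, if_neg, not_false_iff]
        have g2 : g (x + 1) = x + 1 := by rw [hg]; simp only [hy, if_neg, not_false_iff]
        rw [g1, g2]
        exact adj_self_add_one hn hxE
    intro x y hxy
    rcases hxy.2 with ⟨h1, h2⟩ | ⟨h1, h2⟩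
    · subst h2; exact main x h1
    · subst h2; exact (main y h1).symm
  refine ⟨ρ, fun a b => ⟨fun h => ?_, fun h => ?_⟩, ?_⟩
  · have := key _ _ h
    rwa [hρx, hρx, hinv a, hinv b] at this
  · exact key a b h
  · have hgs := harc 0 (by omega)
    simp only [Nat.cast_zero, add_zero, Nat.sub_zero] at hgs
    rw [hρx, hgs]
    intro hcon
    have h0 : ((len - 1 : ℕ) : Fin n) = 0 := by
      have : s + ((len-1:ℕ) : Fin n) - s = s - s := by rw [hcon]
      simpa using this
    have := fin_cast_inj (n := n) (k := len - 1) (l := 0) (by omega) (by omega)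
      (by simpa using h0)
    omega

end engine

section swaps
variable {n : ℕ} [NeZero n] {E : Finset (Fin n)}

/-- Swapping the endpoints of an isolated edge is adjacency preserving. -/
lemma swapedge (hn : 3 ≤ n) {u : Fin n} (hu : u ∈ E) (hul : u - 1 ∉ E) (hur : u + 1 ∉ E) :
    ∀ a b, (arcGraph n E).Adj (Equiv.swap u (u+1) a) (Equiv.swap u (u+1) b) ↔
      (arcGraph n E).Adj a b := by
  have hne : u ≠ u + 1 := self_ne_add_one hn u
  set σ := Equiv.swap u (u+1) with hσdef
  have haux : ∀ x y : Fin n, (x = u ∨ x = u + 1) → (arcGraph n E).Adj x y →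
      (arcGraph n E).Adj (σ x) (σ y) := by
    rintro x y (rfl | rfl) hxy
    · rcases arc_nbr hxy with ⟨-, rfl⟩ | ⟨h1, -⟩
      · rw [hσdef, Equiv.swap_apply_left, Equiv.swap_apply_right]
        exact (adj_self_add_one hn hu).symm
      · exact absurd h1 hul
    · rcases arc_nbr hxy with ⟨h1, -⟩ | ⟨h1, rfl⟩
      · exact absurd h1 (by simpa using hur)
      · have : u + 1 - 1 = u := by ring
        rw [this, hσdef, Equiv.swap_apply_left, Equiv.swap_apply_right]
        exact adj_self_add_one hn hu
  have key : ∀ x y : Fin n, (arcGraph n E).Adj x y → (arcGraph n E).Adj (σ x) (σ y) := by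
    intro x y hxy
    by_cases hx : x = u ∨ x = u + 1
    · exact haux x y hx hxy
    · by_cases hy : y = u ∨ y = u + 1
      · exact (haux y x hy hxy.symm).symm
      · push_neg at hx hy
        rw [hσdef, Equiv.swap_apply_of_ne_of_ne hx.1 hx.2,
          Equiv.swap_apply_of_ne_of_ne hy.1 hy.2]
        exact hxy
  have hinv : ∀ x, σ (σ x) = x := fun x => Equiv.swap_apply_self _ _ x
  intro a b
  constructor
  · intro h
    have := key _ _ h
    rwa [hinv, hinv] at this
  · exact key a b

/-- Swapping two isolated edges (matching orientation) is adjacency preserving. -/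
lemma swap2edge (hn : 3 ≤ n) {u w : Fin n} (huw : u ≠ w)
    (hu : u ∈ E) (hul : u - 1 ∉ E) (hur : u + 1 ∉ E)
    (hw : w ∈ E) (hwl : w - 1 ∉ E) (hwr : w + 1 ∉ E) :
    ∀ a b, (arcGraph n E).Adj
      ((Equiv.swap (u+1) (w+1)).trans (Equiv.swap u w) a)
      ((Equiv.swap (u+1) (w+1)).trans (Equiv.swap u w) b) ↔
      (arcGraph n E).Adj a b := by
  have h1 : u + 1 ≠ w := fun h => hwl (by rw [← h]; simpa using hu)
  have h2 : w + 1 ≠ u := fun h => hul (by rw [← h]; simpa using hw)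
  have h3 : u + 1 ≠ w + 1 := fun h => huw (by
    have : u + 1 - 1 = w + 1 - 1 := by rw [h]
    simpa using this)
  have hneu : u ≠ u + 1 := self_ne_add_one hn u
  have hnew : w ≠ w + 1 := self_ne_add_one hn w
  set σ := (Equiv.swap (u+1) (w+1)).trans (Equiv.swap u w) with hσdef
  have vσu : σ u = w := by
    rw [hσdef, Equiv.trans_apply, Equiv.swap_apply_of_ne_of_ne hneu (Ne.symm h2),
      Equiv.swap_apply_left]
  have vσu1 : σ (u+1) = w + 1 := by
    rw [hσdef, Equiv.trans_apply, Equiv.swap_apply_left,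
      Equiv.swap_apply_of_ne_of_ne h2 (Ne.symm hnew)]
  have vσw : σ w = u := by
    rw [hσdef, Equiv.trans_apply, Equiv.swap_apply_of_ne_of_ne (Ne.symm h1) hnew,
      Equiv.swap_apply_right]
  have vσw1 : σ (w+1) = u + 1 := by
    rw [hσdef, Equiv.trans_apply, Equiv.swap_apply_right,
      Equiv.swap_apply_of_ne_of_ne (Ne.symm hneu) h1]
  have vσo : ∀ x, x ≠ u → x ≠ u + 1 → x ≠ w → x ≠ w + 1 → σ x = x := by
    intro x a b c d
    rw [hσdef, Equiv.trans_apply, Equiv.swap_apply_of_ne_of_ne b d,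
      Equiv.swap_apply_of_ne_of_ne a c]
  have haux : ∀ x y : Fin n, (x = u ∨ x = u + 1 ∨ x = w ∨ x = w + 1) →
      (arcGraph n E).Adj x y → (arcGraph n E).Adj (σ x) (σ y) := by
    rintro x y (rfl | rfl | rfl | rfl) hxy
    · rcases arc_nbr hxy with ⟨-, rfl⟩ | ⟨hh, -⟩
      · rw [vσu, vσu1]; exact adj_self_add_one hn hw
      · exact absurd hh hul
    · rcases arc_nbr hxy with ⟨hh, -⟩ | ⟨hh, rfl⟩
      · exact absurd hh (by simpa using hur)
      · have e : u + 1 - 1 = u := by ring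
        rw [e, vσu1, vσu]; exact (adj_self_add_one hn hw).symm
    · rcases arc_nbr hxy with ⟨-, rfl⟩ | ⟨hh, -⟩
      · rw [vσw, vσw1]; exact adj_self_add_one hn hu
      · exact absurd hh hwl
    · rcases arc_nbr hxy with ⟨hh, -⟩ | ⟨hh, rfl⟩
      · exact absurd hh (by simpa using hwr)
      · have e : w + 1 - 1 = w := by ring
        rw [e, vσw1, vσw]; exact (adj_self_add_one hn hu).symm
  have key : ∀ x y : Fin n, (arcGraph n E).Adj x y → (arcGraph n E).Adj (σ x) (σ y) := by
    intro x y hxy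
    by_cases hx : x = u ∨ x = u + 1 ∨ x = w ∨ x = w + 1
    · exact haux x y hx hxy
    · by_cases hy : y = u ∨ y = u + 1 ∨ y = w ∨ y = w + 1
      · exact (haux y x hy hxy.symm).symm
      · push_neg at hx hy
        rw [vσo x hx.1 hx.2.1 hx.2.2.1 hx.2.2.2, vσo y hy.1 hy.2.1 hy.2.2.1 hy.2.2.2]
        exact hxy
  have hinv : ∀ x, σ (σ x) = x := by
    intro x
    by_cases a : x = u; · rw [a, vσu, vσw]
    by_cases b : x = u + 1; · rw [b, vσu1, vσw1]
    by_cases c : x = w; · rw [c, vσw, vσu]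
    by_cases d : x = w + 1; · rw [d, vσw1, vσu1]
    rw [vσo x a b c d, vσo x a b c d]
  intro a b
  constructor
  · intro h
    have := key _ _ h
    rwa [hinv, hinv] at this
  · exact key a b
end swaps

section ne2
variable {n : ℕ} [NeZero n] {E : Finset (Fin n)}

lemma fin2_aux : ∀ a b c : Fin 2, a ≠ b → c ≠ a → c = b := by decide
lemma fin2_aux2 : ∀ a b c d : Fin 2, a ≠ b → c ≠ d → a = c → b = d := by decide

lemma pres_trans {σ τ : Equiv.Perm (Fin n)}
    (hσ : ∀ a b, (arcGraph n E).Adj (σ a) (σ b) ↔ (arcGraph n E).Adj a b)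
    (hτ : ∀ a b, (arcGraph n E).Adj (τ a) (τ b) ↔ (arcGraph n E).Adj a b) :
    ∀ a b, (arcGraph n E).Adj ((σ.trans τ) a) ((σ.trans τ) b) ↔ (arcGraph n E).Adj a b := by
  intro a b
  simp only [Equiv.trans_apply]
  rw [hτ, hσ]

/-- With two isolated edges, no 2-labeling is distinguishing. -/
lemma two_isolated_edges (hn : 3 ≤ n) {u w : Fin n} (huw : u ≠ w)
    (hu : u ∈ E) (hul : u - 1 ∉ E) (hur : u + 1 ∉ E)
    (hw : w ∈ E) (hwl : w - 1 ∉ E) (hwr : w + 1 ∉ E) :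
    ∀ f : Fin n → Fin 2, ∃ σ : Equiv.Perm (Fin n),
      (∀ a b, (arcGraph n E).Adj (σ a) (σ b) ↔ (arcGraph n E).Adj a b) ∧
      (∀ x, f (σ x) = f x) ∧ ∃ x, σ x ≠ x := by
  intro f
  have h1 : u + 1 ≠ w := fun h => hwl (by rw [← h]; simpa using hu)
  have h2 : w + 1 ≠ u := fun h => hul (by rw [← h]; simpa using hw)
  have h3 : u + 1 ≠ w + 1 := fun h => huw (by
    have : u + 1 - 1 = w + 1 - 1 := by rw [h]
    simpa using this)
  have hneu : u ≠ u + 1 := self_ne_add_one hn u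
  have hnew : w ≠ w + 1 := self_ne_add_one hn w
  by_cases hfu : f u = f (u + 1)
  · refine ⟨Equiv.swap u (u+1), swapedge hn hu hul hur, fun x => ?_, u, ?_⟩
    · by_cases a : x = u
      · rw [a, Equiv.swap_apply_left, ← hfu]
      · by_cases b : x = u + 1
        · rw [b, Equiv.swap_apply_right, hfu]
        · rw [Equiv.swap_apply_of_ne_of_ne a b]
    · rw [Equiv.swap_apply_left]; exact Ne.symm hneu
  by_cases hfw : f w = f (w + 1)
  · refine ⟨Equiv.swap w (w+1), swapedge hn hw hwl hwr, fun x => ?_, w, ?_⟩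
    · by_cases a : x = w
      · rw [a, Equiv.swap_apply_left, ← hfw]
      · by_cases b : x = w + 1
        · rw [b, Equiv.swap_apply_right, hfw]
        · rw [Equiv.swap_apply_of_ne_of_ne a b]
    · rw [Equiv.swap_apply_left]; exact Ne.symm hnew
  -- both edges bicolored
  set σm := (Equiv.swap (u+1) (w+1)).trans (Equiv.swap u w) with hσdef
  have vσu : σm u = w := by
    rw [hσdef, Equiv.trans_apply, Equiv.swap_apply_of_ne_of_ne hneu (Ne.symm h2),
      Equiv.swap_apply_left]
  have vσu1 : σm (u+1) = w + 1 := by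
    rw [hσdef, Equiv.trans_apply, Equiv.swap_apply_left,
      Equiv.swap_apply_of_ne_of_ne h2 (Ne.symm hnew)]
  have vσw : σm w = u := by
    rw [hσdef, Equiv.trans_apply, Equiv.swap_apply_of_ne_of_ne (Ne.symm h1) hnew,
      Equiv.swap_apply_right]
  have vσw1 : σm (w+1) = u + 1 := by
    rw [hσdef, Equiv.trans_apply, Equiv.swap_apply_right,
      Equiv.swap_apply_of_ne_of_ne (Ne.symm hneu) h1]
  have vσo : ∀ x, x ≠ u → x ≠ u + 1 → x ≠ w → x ≠ w + 1 → σm x = x := by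
    intro x a b c d
    rw [hσdef, Equiv.trans_apply, Equiv.swap_apply_of_ne_of_ne b d,
      Equiv.swap_apply_of_ne_of_ne a c]
  have hpres := swap2edge hn huw hu hul hur hw hwl hwr
  by_cases hm : f u = f w
  · have hm1 : f (u+1) = f (w+1) := fin2_aux2 _ _ _ _ hfu hfw hm
    refine ⟨σm, hpres, fun x => ?_, u, by rw [vσu]; exact Ne.symm huw⟩
    by_cases a : x = u; · rw [a, vσu, ← hm]
    by_cases b : x = u + 1; · rw [b, vσu1, ← hm1]
    by_cases c : x = w; · rw [c, vσw, hm]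
    by_cases d : x = w + 1; · rw [d, vσw1, hm1]
    rw [vσo x a b c d]
  · -- crossed
    have hc1 : f u = f (w+1) := fin2_aux (f w) (f (w+1)) (f u) hfw hm
    have hc2 : f (u+1) = f w := (fin2_aux (f u) (f (u+1)) (f w) hfu (Ne.symm hm)).symm
    set σc := ((Equiv.swap u (u+1)).trans σm).trans (Equiv.swap u (u+1)) with hcdef
    have hcpres := pres_trans (pres_trans (swapedge hn hu hul hur) hpres)
      (swapedge hn hu hul hur)
    have vcu : σc u = w + 1 := by
      rw [hcdef, Equiv.trans_apply, Equiv.trans_apply, Equiv.swap_apply_left, vσu1,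
        Equiv.swap_apply_of_ne_of_ne h2 (Ne.symm h3)]
    have vcu1 : σc (u+1) = w := by
      rw [hcdef, Equiv.trans_apply, Equiv.trans_apply, Equiv.swap_apply_right, vσu,
        Equiv.swap_apply_of_ne_of_ne (Ne.symm huw) (Ne.symm h1)]
    have vcw : σc w = u + 1 := by
      rw [hcdef, Equiv.trans_apply, Equiv.trans_apply,
        Equiv.swap_apply_of_ne_of_ne (Ne.symm huw) (Ne.symm h1), vσw,
        Equiv.swap_apply_left]
    have vcw1 : σc (w+1) = u := by
      rw [hcdef, Equiv.trans_apply, Equiv.trans_apply,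
        Equiv.swap_apply_of_ne_of_ne h2 (Ne.symm h3), vσw1,
        Equiv.swap_apply_right]
    have vco : ∀ x, x ≠ u → x ≠ u + 1 → x ≠ w → x ≠ w + 1 → σc x = x := by
      intro x a b c d
      rw [hcdef, Equiv.trans_apply, Equiv.trans_apply,
        Equiv.swap_apply_of_ne_of_ne a b, vσo x a b c d, Equiv.swap_apply_of_ne_of_ne a b]
    refine ⟨σc, hcpres, fun x => ?_, u, by rw [vcu]; exact h2⟩
    by_cases a : x = u; · rw [a, vcu, ← hc1]
    by_cases b : x = u + 1; · rw [b, vcu1, ← hc2]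
    by_cases c : x = w; · rw [c, vcw, hc2]
    by_cases d : x = w + 1; · rw [d, vcw1, hc1]
    rw [vco x a b c d]

end ne2

section scenarios
variable {n : ℕ} [NeZero n] {E : Finset (Fin n)}

lemma cast_pred_self (hn : 1 ≤ n) : ((n-1 : ℕ) : Fin n) = -1 := by
  have h : ((n-1 : ℕ) : Fin n) + 1 = 0 := by
    rw [show (1 : Fin n) = ((1:ℕ) : Fin n) by simp, ← Nat.cast_add,
      show n - 1 + 1 = n by omega]
    simp
  linear_combination h

lemma fin_cover (s : Fin n) (x : Fin n) : ∃ m : ℕ, m < n ∧ x = s + (m : ℕ) := by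
  refine ⟨(x - s).val, (x - s).isLt, ?_⟩
  rw [Fin.cast_val_eq_self]
  ring

lemma indicator_mem {S : Finset (Fin n)} {σ : Equiv.Perm (Fin n)}
    (hp : ∀ x, (if σ x ∈ S then (0:Fin 2) else 1) = (if x ∈ S then (0:Fin 2) else 1)) :
    ∀ x, σ x ∈ S ↔ x ∈ S := by
  intro x
  have := hp x
  by_cases h1 : σ x ∈ S <;> by_cases h2 : x ∈ S <;>
    simp [h1, h2] at this <;> tauto

lemma onearc_distNum (hn : 3 ≤ n) {s : Fin n} (hl : s - 1 ∉ E)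
    (hE : ∀ k : ℕ, k + 1 < n → s + (k : Fin n) ∈ E) :
    distNum (arcGraph n E) = 2 := by
  haveI : Nonempty (Fin n) := ⟨0⟩
  have hr : s + ((n-1:ℕ) : Fin n) ∉ E := by
    rw [cast_pred_self (by omega), show s + (-1 : Fin n) = s - 1 by ring]
    exact hl
  obtain ⟨ρ, hρ1, hρ2⟩ := arcrev hn (by omega) le_rfl hl hr hE
  refine distNum_eq_two _ (fun x => if x ∈ ({s} : Finset (Fin n)) then 0 else 1)
    ?_ ρ hρ1 s hρ2
  intro σ hσ hf x
  have hmem := indicator_mem hf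
  have hxs : σ s = s := Finset.mem_singleton.1 ((hmem s).2 (Finset.mem_singleton_self s))
  obtain ⟨m, hm, rfl⟩ := fin_cover s x
  exact compid hσ hn hxs hl (a := n) (fun k hk => hE k hk) m hm

lemma twoarc_distNum (hn : 5 ≤ n) {s1 : Fin n} {a b : ℕ}
    (hab : a + b = n) (ha : 1 ≤ a) (hb : 1 ≤ b)
    (hl1 : s1 - 1 ∉ E) (hr1 : s1 + ((a-1:ℕ) : Fin n) ∉ E)
    (hE1 : ∀ k : ℕ, k + 1 < a → s1 + (k : Fin n) ∈ E)
    (hE2 : ∀ k : ℕ, k + 1 < b → s1 + ((a:ℕ) : Fin n) + (k : Fin n) ∈ E) :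
    distNum (arcGraph n E) = 2 := by
  haveI : Nonempty (Fin n) := ⟨0⟩
  have hn3 : 3 ≤ n := by omega
  set s2 : Fin n := s1 + ((a:ℕ) : Fin n) with hs2
  -- arithmetic facts
  have hcast1 : ((a:ℕ) : Fin n) = ((a-1:ℕ) : Fin n) + 1 := by
    rw [show a = (a-1)+1 by omega]; push_cast; ring
  have hs2m1 : s2 - 1 = s1 + ((a-1:ℕ) : Fin n) := by rw [hs2, hcast1]; ring
  have hl2 : s2 - 1 ∉ E := by rw [hs2m1]; exact hr1
  have hr2 : s2 + ((b-1:ℕ) : Fin n) ∉ E := by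
    have : s2 + ((b-1:ℕ) : Fin n) = s1 + ((n-1:ℕ) : Fin n) := by
      rw [hs2, add_assoc, ← Nat.cast_add, show a + (b-1) = n - 1 by omega]
    rw [this, cast_pred_self (by omega), show s1 + (-1 : Fin n) = s1 - 1 by ring]
    exact hl1
  have hane : ((a:ℕ) : Fin n) ≠ 0 := by
    intro h
    have := fin_cast_inj (n := n) (k := a) (l := 0) (by omega) (by omega) (by simpa using h)
    omega
  have hne12 : s1 ≠ s2 := by
    rw [hs2]; intro h
    exact hane (by linear_combination h.symm)
  -- coverage
  have hcov : ∀ x : Fin n, (∃ m : ℕ, m < a ∧ x = s1 + (m:ℕ)) ∨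
      (∃ m : ℕ, m < b ∧ x = s2 + (m:ℕ)) := by
    intro x
    obtain ⟨m, hm, rfl⟩ := fin_cover s1 x
    rcases Nat.lt_or_ge m a with h | h
    · exact Or.inl ⟨m, h, rfl⟩
    · refine Or.inr ⟨m - a, by omega, ?_⟩
      rw [hs2, add_assoc, ← Nat.cast_add, show a + (m - a) = m by omega]
  -- rigidity given the two anchors
  have hfinish : ∀ σ : Equiv.Perm (Fin n),
      (∀ x y, (arcGraph n E).Adj (σ x) (σ y) ↔ (arcGraph n E).Adj x y) →
      σ s1 = s1 → σ s2 = s2 → ∀ x, σ x = x := by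
    intro σ hσ h1 h2 x
    rcases hcov x with ⟨m, hm, rfl⟩ | ⟨m, hm, rfl⟩
    · exact compid hσ hn3 h1 hl1 (a := a) hE1 m hm
    · exact compid hσ hn3 h2 hl2 (a := b) (fun k hk => hE2 k hk) m hm
  -- swap is impossible
  have hswap : ∀ σ : Equiv.Perm (Fin n),
      (∀ x y, (arcGraph n E).Adj (σ x) (σ y) ↔ (arcGraph n E).Adj x y) →
      σ s1 = s2 → σ s2 = s1 → a = b := by
    intro σ hσ h1 h2
    by_contra hab'
    rcases Nat.lt_or_ge a b with hlt | hge
    · -- a < b : map arc2 start onto arc1 start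
      have hs2E : s2 ∈ E := by simpa using hE2 0 (by omega)
      obtain ⟨hstep, hs1E⟩ := emap hσ hn3 h2 hl1 hs2E
      rcases Nat.eq_or_lt_of_le ha with h1a | h1a
      · exact hr1 (by rw [← h1a]; simpa using hs1E)
      · have := (gmap hσ hn3 h2 hstep (a-1) (fun k hk => hE2 k (by omega))).2.2
          (a-1) (by omega) le_rfl
        exact hr1 this
    · have hlt : b < a := by omega
      have hs1E : s1 ∈ E := by simpa using hE1 0 (by omega)
      obtain ⟨hstep, hs2E⟩ := emap hσ hn3 h1 hl2 hs1E
      rcases Nat.eq_or_lt_of_le hb with h1b | h1b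
      · refine hr2 ?_
        rw [show b - 1 = 0 by omega]
        simpa using hs2E
      · have := (gmap hσ hn3 h1 hstep (b-1) (fun k hk => hE1 k (by omega))).2.2
          (b-1) (by omega) le_rfl
        exact hr2 this
  -- nontrivial automorphism
  have hrev : ∃ ρ : Equiv.Perm (Fin n),
      (∀ x y, (arcGraph n E).Adj (ρ x) (ρ y) ↔ (arcGraph n E).Adj x y) ∧ ∃ v, ρ v ≠ v := by
    rcases Nat.lt_or_ge a 2 with h | h
    · obtain ⟨ρ, p1, p2⟩ := arcrev hn3 (len := b) (by omega) (by omega) hl2 hr2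
        (fun k hk => hE2 k hk)
      exact ⟨ρ, p1, s2, p2⟩
    · obtain ⟨ρ, p1, p2⟩ := arcrev hn3 (len := a) h (by omega) hl1 hr1 hE1
      exact ⟨ρ, p1, s1, p2⟩
  obtain ⟨ρ, hρ1, v, hρ2⟩ := hrev
  rcases Nat.decEq a b with hab' | hab'
  · -- a ≠ b : mark the two left endpoints
    refine distNum_eq_two _ (fun x => if x ∈ ({s1, s2} : Finset (Fin n)) then 0 else 1)
      ?_ ρ hρ1 v hρ2
    intro σ hσ hf x
    have hmem := indicator_mem hf
    have hm1 : σ s1 ∈ ({s1, s2} : Finset (Fin n)) := (hmem s1).2 (by simp)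
    have hm2 : σ s2 ∈ ({s1, s2} : Finset (Fin n)) := (hmem s2).2 (by simp)
    simp only [Finset.mem_insert, Finset.mem_singleton] at hm1 hm2
    have hid : σ s1 = s1 ∧ σ s2 = s2 := by
      rcases hm1 with h1 | h1
      · refine ⟨h1, ?_⟩
        rcases hm2 with h2 | h2
        · exact absurd (σ.injective (h1.trans h2.symm)) hne12
        · exact h2
      · rcases hm2 with h2 | h2
        · exact absurd (hswap σ hσ h1 h2) hab'
        · exact absurd (σ.injective (h1.trans h2.symm)) hne12
    exact hfinish σ hσ hid.1 hid.2 x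
  · -- a = b ≥ 3 : mark s1, s2, s2+1
    subst hab'
    have ha3 : 3 ≤ a := by omega
    have hs2E : s2 ∈ E := by simpa using hE2 0 (by omega)
    have hs21E : s2 + 1 ∈ E := by
      have := hE2 1 (by omega)
      simpa using this
    have d2 : s1 ≠ s2 + 1 := by
      intro h
      apply hl2
      rw [show s2 = s1 - 1 by rw [h]; ring] at hs2E
      exact absurd hs2E hl1
    have d3 : s2 ≠ s2 + 1 := self_ne_add_one hn3 s2
    have nadj1 : ¬ (arcGraph n E).Adj s1 s2 := by
      rintro ⟨-, ⟨h1, h2⟩ | ⟨h1, h2⟩⟩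
      · apply hl2
        rw [h2]
        simpa using h1
      · exact d2 h2
    have nadj2 : ¬ (arcGraph n E).Adj s1 (s2 + 1) := by
      rintro ⟨-, ⟨h1, h2⟩ | ⟨h1, h2⟩⟩
      · exact hne12 (by linear_combination -h2)
      · apply hl1
        rw [show s1 - 1 = s2 + 1 by rw [h2]; ring]
        exact hs21E
    refine distNum_eq_two _ (fun x => if x ∈ ({s1, s2, s2 + 1} : Finset (Fin n)) then 0 else 1)
      ?_ ρ hρ1 v hρ2
    intro σ hσ hf x
    have hmem := indicator_mem hf
    have hm1 : σ s1 = s1 ∨ σ s1 = s2 ∨ σ s1 = s2 + 1 := by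
      have := (hmem s1).2 (by simp)
      simpa using this
    have hm2 : σ s2 = s1 ∨ σ s2 = s2 ∨ σ s2 = s2 + 1 := by
      have := (hmem s2).2 (by simp)
      simpa using this
    have hm3 : σ (s2+1) = s1 ∨ σ (s2+1) = s2 ∨ σ (s2+1) = s2 + 1 := by
      have := (hmem (s2+1)).2 (by simp)
      simpa using this
    have hadj23 : (arcGraph n E).Adj (σ s2) (σ (s2+1)) :=
      (hσ _ _).2 (adj_self_add_one hn3 hs2E)
    -- the only adjacent pair in the fiber is {s2, s2+1}
    have hpair : (σ s2 = s2 ∧ σ (s2+1) = s2 + 1) ∨ (σ s2 = s2 + 1 ∧ σ (s2+1) = s2) := by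
      rcases hm2 with h2 | h2 | h2 <;> rcases hm3 with h3 | h3 | h3 <;>
        rw [h2, h3] at hadj23
      · exact absurd hadj23 (arcGraph n E).irrefl
      · exact absurd hadj23 nadj1
      · exact absurd hadj23 nadj2
      · exact absurd hadj23.symm nadj1
      · exact absurd hadj23 (arcGraph n E).irrefl
      · exact Or.inl ⟨h2, h3⟩
      · exact absurd hadj23.symm nadj2
      · exact Or.inr ⟨h2, h3⟩
      · exact absurd hadj23 (arcGraph n E).irrefl
    -- rule out the reflection of the isolated pair
    have hfix : σ s2 = s2 ∧ σ (s2+1) = s2 + 1 := by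
      rcases hpair with h | ⟨h2, h3⟩
      · exact h
      · exfalso
        have hadj : (arcGraph n E).Adj (σ (s2+1)) (σ (s2+1+1)) :=
          (hσ _ _).2 (adj_self_add_one hn3 hs21E)
        rw [h3] at hadj
        rcases arc_nbr hadj with ⟨-, h4⟩ | ⟨h4, -⟩
        · have : σ (s2+1+1) = σ s2 := by rw [h4, h2]
          have := σ.injective this
          have h2z : (2 : Fin n) = 0 := by linear_combination this
          exact fin_two_ne_zero hn3 h2z
        · exact hl2 h4
    have hfix1 : σ s1 = s1 := by
      rcases hm1 with h | h | h
      · exact h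
      · exact absurd (σ.injective (h.trans hfix.1.symm)) hne12
      · exact absurd (σ.injective (h.trans hfix.2.symm)) d2
    exact hfinish σ hσ hfix1 hfix.1 x

end scenarios

section bridges
variable {n : ℕ} [NeZero n]

def Epath (n : ℕ) [NeZero n] : Finset (Fin n) := Finset.univ.filter (fun i => (i:ℕ) + 1 < n)

lemma mem_Epath {i : Fin n} : i ∈ Epath n ↔ (i:ℕ) + 1 < n := by simp [Epath]

lemma fin_self_cast (x : Fin n) : x = ((x.val : ℕ) : Fin n) := (Fin.cast_val_eq_self x).symm

lemma fin_add_one_cast (x : Fin n) : x + 1 = ((x.val + 1 : ℕ) : Fin n) := by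
  conv_lhs => rw [fin_self_cast x]
  push_cast
  ring

lemma path_eq_arc (hn : 3 ≤ n) : pathGraph n = arcGraph n (Epath n) := by
  ext x y
  rw [pathGraph_adj, arc_adj]
  constructor
  · rintro (h | h)
    · refine ⟨by intro hc; subst hc; omega, Or.inl ⟨mem_Epath.2 (by omega), ?_⟩⟩
      rw [fin_add_one_cast x, h, Fin.cast_val_eq_self]
    · refine ⟨by intro hc; subst hc; omega, Or.inr ⟨mem_Epath.2 (by omega), ?_⟩⟩
      rw [fin_add_one_cast y, h, Fin.cast_val_eq_self]
  · rintro ⟨hne, ⟨h1, h2⟩ | ⟨h1, h2⟩⟩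
    · left
      rw [mem_Epath] at h1
      rw [h2, fin_add_one_cast x, fin_cast_val _ h1]
    · right
      rw [mem_Epath] at h1
      rw [h2, fin_add_one_cast y, fin_cast_val _ h1]

lemma fin_sub_val_one {u v : Fin n} (hn : 3 ≤ n) : (u - v).val = 1 ↔ u = v + 1 := by
  constructor
  · intro h
    have h1 : u - v = 1 := by
      rw [fin_self_cast (u - v), h]
      simp
    linear_combination h1
  · intro h
    rw [h, show v + 1 - v = 1 by ring]
    rw [show (1 : Fin n) = ((1:ℕ) : Fin n) by simp, fin_cast_val _ (by omega)]

lemma cycle_eq_arc (hn : 3 ≤ n) : cycleGraph n = arcGraph n Finset.univ := by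
  ext x y
  rw [cycleGraph_adj', arc_adj]
  constructor
  · rintro (h | h)
    · rw [fin_sub_val_one hn] at h
      exact ⟨by rw [h]; exact (self_ne_add_one hn y).symm, Or.inr ⟨Finset.mem_univ _, h⟩⟩
    · rw [fin_sub_val_one hn] at h
      exact ⟨by rw [h]; exact self_ne_add_one hn x, Or.inl ⟨Finset.mem_univ _, h⟩⟩
  · rintro ⟨hne, ⟨-, h2⟩ | ⟨-, h2⟩⟩
    · exact Or.inr ((fin_sub_val_one hn).2 h2)
    · exact Or.inl ((fin_sub_val_one hn).2 h2)

lemma sym2_arc_inj (hn : 3 ≤ n) {i j : Fin n} (h : s(i, i+1) = s(j, j+1)) : i = j := by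
  rw [Sym2.eq_iff] at h
  rcases h with ⟨h1, -⟩ | ⟨h1, h2⟩
  · exact h1
  · exfalso
    rw [h1] at h2
    have : (2 : Fin n) = 0 := by linear_combination h2
    exact fin_two_ne_zero hn this

lemma arc_edge_mem (hn : 3 ≤ n) {E : Finset (Fin n)} {e : Sym2 (Fin n)}
    (he : e ∈ (arcGraph n E).edgeSet) : ∃ i, i ∈ E ∧ e = s(i, i+1) := by
  induction e with
  | _ x y =>
    rw [SimpleGraph.mem_edgeSet] at he
    rcases he.2 with ⟨h1, h2⟩ | ⟨h1, h2⟩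
    · exact ⟨x, h1, by rw [h2]⟩
    · exact ⟨y, h1, by rw [h2, Sym2.eq_swap]⟩

lemma delete_set (hn : 3 ≤ n) (E : Finset (Fin n)) (D : Finset (Fin n)) :
    (arcGraph n E).deleteEdges ((fun i => s(i, i+1)) '' (D : Set (Fin n)))
      = arcGraph n (E \ D) := by
  ext x y
  rw [SimpleGraph.deleteEdges_adj, arc_adj, arc_adj]
  have himg : ∀ z : Fin n, (s(z, z+1) ∈ (fun i => s(i, i+1)) '' (D : Set (Fin n))) ↔ z ∈ D := by
    intro z
    constructor
    · rintro ⟨i, hi, hie⟩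
      rwa [← sym2_arc_inj hn hie.symm] at hi
    · intro hz
      exact ⟨z, hz, rfl⟩
  constructor
  · rintro ⟨⟨hne, hcl⟩, hnm⟩
    refine ⟨hne, ?_⟩
    rcases hcl with ⟨h1, h2⟩ | ⟨h1, h2⟩
    · refine Or.inl ⟨Finset.mem_sdiff.2 ⟨h1, fun hd => hnm ?_⟩, h2⟩
      rw [h2]
      exact (himg x).2 hd
    · refine Or.inr ⟨Finset.mem_sdiff.2 ⟨h1, fun hd => hnm ?_⟩, h2⟩
      rw [h2, Sym2.eq_swap]
      exact (himg y).2 hd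
  · rintro ⟨hne, hcl⟩
    rcases hcl with ⟨h1, h2⟩ | ⟨h1, h2⟩ <;> rw [Finset.mem_sdiff] at h1
    · refine ⟨⟨hne, Or.inl ⟨h1.1, h2⟩⟩, fun hm => h1.2 ?_⟩
      rw [h2] at hm
      exact (himg x).1 hm
    · refine ⟨⟨hne, Or.inr ⟨h1.1, h2⟩⟩, fun hm => h1.2 ?_⟩
      rw [h2, Sym2.eq_swap] at hm
      exact (himg y).1 hm

end bridges

section cyclefull
variable {n : ℕ} [NeZero n]

lemma rot_pres : ∀ a b : Fin n, (arcGraph n Finset.univ).Adj (a + 1) (b + 1) ↔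
    (arcGraph n Finset.univ).Adj a b := by
  intro a b
  rw [arc_adj, arc_adj]
  constructor
  · rintro ⟨hne, h | h⟩
    · exact ⟨fun hc => hne (by rw [hc]), Or.inl ⟨Finset.mem_univ _, by linear_combination h.2⟩⟩
    · exact ⟨fun hc => hne (by rw [hc]), Or.inr ⟨Finset.mem_univ _, by linear_combination h.2⟩⟩
  · rintro ⟨hne, h | h⟩
    · exact ⟨fun hc => hne (by linear_combination hc), Or.inl ⟨Finset.mem_univ _, by linear_combination h.2⟩⟩
    · exact ⟨fun hc => hne (by linear_combination hc), Or.inr ⟨Finset.mem_univ _, by linear_combination h.2⟩⟩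

lemma cyclefull_distNum (hn : 6 ≤ n) : distNum (arcGraph n Finset.univ) = 2 := by
  haveI : Nonempty (Fin n) := ⟨0⟩
  have hn3 : 3 ≤ n := by omega
  set c1 : Fin n := ((1:ℕ) : Fin n) with hc1
  set c2 : Fin n := ((2:ℕ) : Fin n) with hc2
  set c3 : Fin n := ((3:ℕ) : Fin n) with hc3
  set c4 : Fin n := ((4:ℕ) : Fin n) with hc4
  have cne : ∀ k l : ℕ, k < n → l < n → k ≠ l → ((k:ℕ) : Fin n) ≠ ((l:ℕ) : Fin n) := by
    intro k l hk hl hkl hc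
    exact hkl (fin_cast_inj hk hl hc)
  have hone : (1 : Fin n) = c1 := by rw [hc1]; simp
  have h23 : c3 = c2 + 1 := by rw [hc2, hc3, hone, ← Nat.cast_add]
  have h34 : c4 = c3 + 1 := by rw [hc3, hc4, hone, ← Nat.cast_add]
  have h12 : c2 = c1 + 1 := by rw [hc1, hc2, hone, ← Nat.cast_add]
  have h01 : c1 = 0 + 1 := by rw [hc1, hone, zero_add]
  -- basic non-adjacency facts
  have adjiff : ∀ x y : Fin n, (arcGraph n Finset.univ).Adj x y ↔
      x ≠ y ∧ (y = x + 1 ∨ x = y + 1) := by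
    intro x y
    rw [arc_adj]
    simp
  have nadj02 : ¬ (arcGraph n Finset.univ).Adj 0 c2 := by
    rw [adjiff]
    rintro ⟨-, h | h⟩
    · rw [← h01] at h
      exact cne 2 1 (by omega) (by omega) (by omega) h
    · rw [← h23] at h
      exact cne 0 3 (by omega) (by omega) (by omega) (by simpa [hc3] using h)
  have nadj03 : ¬ (arcGraph n Finset.univ).Adj 0 c3 := by
    rw [adjiff]
    rintro ⟨-, h | h⟩
    · rw [← h01] at h
      exact cne 3 1 (by omega) (by omega) (by omega) h
    · rw [← h34] at h
      exact cne 0 4 (by omega) (by omega) (by omega) (by simpa [hc4] using h)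
  refine distNum_eq_two _ (fun x => if x ∈ ({0, c2, c3} : Finset (Fin n)) then 0 else 1)
    ?_ (Equiv.addRight 1) rot_pres 0 (by
      simp only [Equiv.coe_addRight, zero_add]
      intro hcon
      rw [hone] at hcon
      exact cne 1 0 (by omega) (by omega) (by omega)
        (by rw [Nat.cast_zero, ← hc1]; exact hcon))
  intro σ hσ hf x
  have hmem := indicator_mem hf
  have d02 : (0 : Fin n) ≠ c2 := cne 0 2 (by omega) (by omega) (by omega)
  have d03 : (0 : Fin n) ≠ c3 := cne 0 3 (by omega) (by omega) (by omega)
  have d23 : c2 ≠ c3 := cne 2 3 (by omega) (by omega) (by omega)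
  have hm1 : σ 0 = 0 ∨ σ 0 = c2 ∨ σ 0 = c3 := by
    have := (hmem 0).2 (by simp)
    simpa using this
  have hm2 : σ c2 = 0 ∨ σ c2 = c2 ∨ σ c2 = c3 := by
    have := (hmem c2).2 (by simp)
    simpa using this
  have hm3 : σ c3 = 0 ∨ σ c3 = c2 ∨ σ c3 = c3 := by
    have := (hmem c3).2 (by simp)
    simpa using this
  have hadj23 : (arcGraph n Finset.univ).Adj (σ c2) (σ c3) := by
    refine (hσ _ _).2 ?_
    rw [h23]
    exact adj_self_add_one hn3 (Finset.mem_univ _)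
  have hpair : (σ c2 = c2 ∧ σ c3 = c3) ∨ (σ c2 = c3 ∧ σ c3 = c2) := by
    rcases hm2 with h2 | h2 | h2 <;> rcases hm3 with h3 | h3 | h3 <;>
      rw [h2, h3] at hadj23
    · exact absurd hadj23 (arcGraph n Finset.univ).irrefl
    · exact absurd hadj23 nadj02
    · exact absurd hadj23 nadj03
    · exact absurd hadj23.symm nadj02
    · exact absurd hadj23 (arcGraph n Finset.univ).irrefl
    · exact Or.inl ⟨h2, h3⟩
    · exact absurd hadj23.symm nadj03
    · exact Or.inr ⟨h2, h3⟩
    · exact absurd hadj23 (arcGraph n Finset.univ).irrefl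
  -- rule out the reflection case
  have hfix : σ c2 = c2 ∧ σ c3 = c3 := by
    rcases hpair with h | ⟨h2, h3⟩
    · exact h
    exfalso
    have hσ0 : σ 0 = 0 := by
      rcases hm1 with h | h | h
      · exact h
      · exact absurd (σ.injective (h.trans h3.symm)) d03
      · exact absurd (σ.injective (h.trans h2.symm)) d02
    -- σ 1 must be adjacent to σ c2 = c3, and ≠ c2
    have hadj : (arcGraph n Finset.univ).Adj (σ c2) (σ c1) := by
      refine (hσ _ _).2 ?_
      rw [h12]
      exact (adj_self_add_one hn3 (Finset.mem_univ _)).symm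
    rw [h2] at hadj
    have hσ1 : σ c1 = c4 := by
      rcases arc_nbr hadj with ⟨-, hh⟩ | ⟨-, hh⟩
      · rwa [← h34] at hh
      · exfalso
        have : σ c1 = σ c3 := by rw [hh, h3, h23]; ring
        have := σ.injective this
        exact cne 1 3 (by omega) (by omega) (by omega) this
    have hadj01 : (arcGraph n Finset.univ).Adj (σ 0) (σ c1) := by
      refine (hσ _ _).2 ?_
      rw [h01]
      exact adj_self_add_one hn3 (Finset.mem_univ _)
    rw [hσ0, hσ1] at hadj01
    rw [adjiff] at hadj01
    rcases hadj01.2 with h | h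
    · rw [← h01] at h
      exact cne 4 1 (by omega) (by omega) (by omega) h
    · refine cne 0 5 (by omega) (by omega) (by omega) ?_
      rw [Nat.cast_zero, h, h34, h23, hc2]
      push_cast
      norm_num
  have hσ1 : σ c1 = c1 := by
    have hadj : (arcGraph n Finset.univ).Adj (σ c2) (σ c1) := by
      refine (hσ _ _).2 ?_
      rw [h12]
      exact (adj_self_add_one hn3 (Finset.mem_univ _)).symm
    rw [hfix.1] at hadj
    rcases arc_nbr hadj with ⟨-, hh⟩ | ⟨-, hh⟩
    · exfalso
      rw [← h23] at hh
      have := σ.injective (hh.trans hfix.2.symm)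
      exact cne 1 3 (by omega) (by omega) (by omega) this
    · rw [hh, h12]
      ring
  -- propagate from the anchors c2, c3
  obtain ⟨m, hm, rfl⟩ := fin_cover c2 x
  have := (gmap hσ hn3 hfix.1 (by rw [← h23]; exact hfix.2) m
    (fun k _ => Finset.mem_univ _)).1
  exact this

section mainpath
variable {n : ℕ} [NeZero n]

lemma arc_edge_inj (hn : 3 ≤ n) : Function.Injective (fun i : Fin n => s(i, i+1)) :=
  fun _ _ h => sym2_arc_inj hn h

lemma cast_nz {m : ℕ} (h0 : 0 < m) (hm : m < n) : ((m:ℕ) : Fin n) ≠ 0 := by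
  intro h
  have := fin_cast_inj (n := n) (k := m) (l := 0) hm (by omega) (by rw [h, Nat.cast_zero])
  omega

lemma zero_sub_one_not_Epath (hn : 3 ≤ n) : (0 : Fin n) - 1 ∉ Epath n := by
  have h : (0 : Fin n) - 1 = ((n-1 : ℕ) : Fin n) := by
    rw [cast_pred_self (by omega)]; ring
  rw [h, mem_Epath, fin_cast_val _ (by omega)]
  omega

lemma distNum_path (hn : 3 ≤ n) : distNum (arcGraph n (Epath n)) = 2 := by
  refine onearc_distNum hn (s := 0) (zero_sub_one_not_Epath hn) ?_
  intro k hk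
  rw [zero_add, mem_Epath, fin_cast_val _ (by omega)]
  exact hk

theorem bD_path_ge5 (hn : 5 ≤ n) : bD (pathGraph n) = 2 := by
  have hn3 : 3 ≤ n := by omega
  rw [path_eq_arc hn3]
  have hG := distNum_path hn3
  set c1 : Fin n := ((1:ℕ) : Fin n) with hc1
  set c2 : Fin n := ((2:ℕ) : Fin n) with hc2
  set c3 : Fin n := ((3:ℕ) : Fin n) with hc3
  have h12 : c2 = c1 + 1 := by rw [hc1, hc2]; push_cast; ring
  have h23 : c3 = c2 + 1 := by rw [hc2, hc3]; push_cast; ring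
  have h01 : c1 = 0 + 1 := by rw [hc1]; push_cast; ring
  refine bD_eq_of _ 2 ?_ ?_
  · -- deleting edges at 1 and 3 changes the distinguishing number
    refine ⟨(fun i => s(i, i+1)) '' (({c1, c3} : Finset (Fin n)) : Set (Fin n)), ?_, ?_, ?_⟩
    · rintro e ⟨i, hi, rfl⟩
      simp only [Finset.coe_insert, Set.mem_insert_iff, Finset.coe_singleton,
        Set.mem_singleton_iff] at hi
      have hiE : i ∈ Epath n := by
        rcases hi with rfl | rfl <;> rw [mem_Epath, fin_cast_val _ (by omega)] <;> omega
      exact (SimpleGraph.mem_edgeSet _).2 (adj_self_add_one hn3 hiE)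
    · rw [Set.ncard_image_of_injective _ (arc_edge_inj hn3), Set.ncard_coe_finset]
      rw [Finset.card_pair]
      intro h
      have := fin_cast_inj (n := n) (k := 1) (l := 3) (by omega) (by omega) h
      omega
    · rw [delete_set hn3, hG]
      refine distNum_ne_two _ ?_
      intro f
      have h0E : (0 : Fin n) ∈ Epath n \ {c1, c3} := by
        rw [Finset.mem_sdiff, mem_Epath]
        refine ⟨by simp; omega, ?_⟩
        simp only [Finset.mem_insert, Finset.mem_singleton]
        push_neg
        constructor <;> intro h <;>
          [exact absurd h.symm (cast_nz (by omega) (by omega));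
           exact absurd h.symm (cast_nz (by omega) (by omega))]
      have h2E : c2 ∈ Epath n \ {c1, c3} := by
        rw [Finset.mem_sdiff, mem_Epath, fin_cast_val _ (by omega)]
        refine ⟨by omega, ?_⟩
        simp only [Finset.mem_insert, Finset.mem_singleton]
        push_neg
        exact ⟨fun h => by have := fin_cast_inj (n:=n) (k:=2) (l:=1) (by omega) (by omega) h; omega,
               fun h => by have := fin_cast_inj (n:=n) (k:=2) (l:=3) (by omega) (by omega) h; omega⟩
      refine two_isolated_edges hn3 ?_ h0E ?_ ?_ h2E ?_ ?_ f
      · intro h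
        exact cast_nz (n := n) (m := 2) (by omega) (by omega) h.symm
      · intro h
        exact (zero_sub_one_not_Epath hn3) (Finset.mem_sdiff.1 h).1
      · intro h
        rw [Finset.mem_sdiff] at h
        exact h.2 (by rw [← h01]; simp)
      · intro h
        rw [show c2 - 1 = c1 by rw [h12]; ring, Finset.mem_sdiff] at h
        exact h.2 (by simp)
      · intro h
        rw [Finset.mem_sdiff] at h
        exact h.2 (by rw [← h23]; simp)
  · intro d hd
    interval_cases d
    · exact zero_not_mem_TSet _
    · rintro ⟨F, hsub, hcard, hne⟩
      obtain ⟨e, rfl⟩ := Set.ncard_eq_one.1 hcard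
      obtain ⟨i, hiE, rfl⟩ := arc_edge_mem hn3 (hsub rfl)
      have himg : ({s(i, i+1)} : Set (Sym2 (Fin n))) =
          (fun i => s(i, i+1)) '' (({i} : Finset (Fin n)) : Set (Fin n)) := by simp
      rw [himg, delete_set hn3, hG] at hne
      apply hne
      rw [mem_Epath] at hiE
      refine twoarc_distNum hn (s1 := 0) (a := i.val + 1) (b := n - (i.val + 1))
        (by omega) (by omega) (by omega) ?_ ?_ ?_ ?_
      · intro h
        exact (zero_sub_one_not_Epath hn3) (Finset.mem_sdiff.1 h).1
      · intro h
        rw [Finset.mem_sdiff] at h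
        apply h.2
        simp only [Nat.add_sub_cancel, zero_add] at h ⊢
        rw [← fin_self_cast i] at h ⊢
        simp
      · intro k hk
        rw [zero_add, Finset.mem_sdiff, mem_Epath, fin_cast_val _ (by omega)]
        refine ⟨by omega, ?_⟩
        rw [Finset.mem_singleton]
        intro h
        have := fin_cast_inj (n := n) (k := k) (l := i.val) (by omega) (by omega)
          (by rw [h, ← fin_self_cast i])
        omega
      · intro k hk
        rw [zero_add, ← Nat.cast_add, Finset.mem_sdiff, mem_Epath,
          fin_cast_val _ (by omega)]
        refine ⟨by omega, ?_⟩
        rw [Finset.mem_singleton]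
        intro h
        have := fin_cast_inj (n := n) (k := i.val + 1 + k) (l := i.val) (by omega) (by omega)
          (by rw [h, ← fin_self_cast i])
        omega

end mainpath

section maincycle
variable {n : ℕ} [NeZero n]

lemma val_neg_eq {x : Fin n} (hx : x ≠ 0) : (-x).val = n - x.val := by
  have h1 : ((x.val + (-x).val : ℕ) : Fin n) = 0 := by
    push_cast
    ring
  have h2 : n ∣ x.val + (-x).val := by
    rwa [Fin.natCast_eq_zero] at h1
  have hxv : x.val ≠ 0 := fun h => hx (Fin.ext (by simpa using h))
  have hnx : (-x).val ≠ 0 := by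
    intro h
    have : -x = 0 := Fin.ext (by simpa using h)
    have : x = 0 := by linear_combination -this
    exact hx this
  obtain ⟨m, hm⟩ := h2
  have hb1 : x.val < n := x.isLt
  have hb2 : (-x).val < n := (-x).isLt
  have hn0 : 0 < n := Nat.pos_of_ne_zero (NeZero.ne n)
  have hm2 : m < 2 := by nlinarith
  interval_cases m
  · omega
  · omega

lemma mem_univ_sdiff {D : Finset (Fin n)} {x : Fin n} :
    x ∈ Finset.univ \ D ↔ x ∉ D := by simp

theorem bD_cycle_ge6 (hn : 6 ≤ n) : bD (cycleGraph n) = 3 := by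
  have hn3 : 3 ≤ n := by omega
  rw [cycle_eq_arc hn3]
  have hG := cyclefull_distNum hn
  set c1 : Fin n := ((1:ℕ) : Fin n) with hc1
  set c2 : Fin n := ((2:ℕ) : Fin n) with hc2
  set c3 : Fin n := ((3:ℕ) : Fin n) with hc3
  set c4 : Fin n := ((4:ℕ) : Fin n) with hc4
  have cne : ∀ k l : ℕ, k < n → l < n → k ≠ l → ((k:ℕ) : Fin n) ≠ ((l:ℕ) : Fin n) := by
    intro k l hk hl hkl hc
    exact hkl (fin_cast_inj hk hl hc)
  refine bD_eq_of _ 3 ?_ ?_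
  · -- delete edges at 0, 2, 4
    refine ⟨(fun i => s(i, i+1)) '' (({0, c2, c4} : Finset (Fin n)) : Set (Fin n)), ?_, ?_, ?_⟩
    · rintro e ⟨i, -, rfl⟩
      exact (SimpleGraph.mem_edgeSet _).2 (adj_self_add_one hn3 (Finset.mem_univ _))
    · rw [Set.ncard_image_of_injective _ (arc_edge_inj hn3), Set.ncard_coe_finset]
      rw [Finset.card_insert_of_notMem, Finset.card_pair]
      · exact cne 2 4 (by omega) (by omega) (by omega)
      · simp only [Finset.mem_insert, Finset.mem_singleton]
        push_neg
        exact ⟨fun h => cne 2 0 (by omega) (by omega) (by omega)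
                 (by rw [Nat.cast_zero]; exact h.symm),
               fun h => cne 4 0 (by omega) (by omega) (by omega)
                 (by rw [Nat.cast_zero]; exact h.symm)⟩
    · rw [delete_set hn3, hG]
      refine distNum_ne_two _ ?_
      intro f
      have h12 : c2 = c1 + 1 := by rw [hc1, hc2]; push_cast; ring
      have h23 : c3 = c2 + 1 := by rw [hc2, hc3]; push_cast; ring
      have h34 : c4 = c3 + 1 := by rw [hc3, hc4]; push_cast; ring
      have h01 : c1 = 0 + 1 := by rw [hc1]; push_cast; ring
      have hnotmem : ∀ m : ℕ, m < n → m ≠ 0 → m ≠ 2 → m ≠ 4 →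
          ((m : ℕ) : Fin n) ∈ Finset.univ \ ({0, c2, c4} : Finset (Fin n)) := by
        intro m hm hm0 hm2 hm4
        rw [mem_univ_sdiff]
        simp only [Finset.mem_insert, Finset.mem_singleton]
        push_neg
        exact ⟨by rw [show (0 : Fin n) = ((0:ℕ) : Fin n) by simp];
                  exact cne m 0 (by omega) (by omega) (by omega),
               cne m 2 (by omega) (by omega) (by omega),
               cne m 4 (by omega) (by omega) (by omega)⟩
      refine two_isolated_edges hn3 (u := c1) (w := c3)
        (cne 1 3 (by omega) (by omega) (by omega))
        (hnotmem 1 (by omega) (by omega) (by omega) (by omega)) ?_ ?_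
        (hnotmem 3 (by omega) (by omega) (by omega) (by omega)) ?_ ?_ f
      · rw [show c1 - 1 = 0 by rw [h01]; ring, mem_univ_sdiff]
        simp
      · rw [show c1 + 1 = c2 by rw [h12], mem_univ_sdiff]
        simp
      · rw [show c3 - 1 = c2 by rw [h23]; ring, mem_univ_sdiff]
        simp
      · rw [show c3 + 1 = c4 by rw [h34], mem_univ_sdiff]
        simp
  · intro d hd
    interval_cases d
    · exact zero_not_mem_TSet _
    · -- one edge deleted: still a single arc
      rintro ⟨F, hsub, hcard, hne⟩
      obtain ⟨e, rfl⟩ := Set.ncard_eq_one.1 hcard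
      obtain ⟨i, -, rfl⟩ := arc_edge_mem hn3 (hsub rfl)
      have himg : ({s(i, i+1)} : Set (Sym2 (Fin n))) =
          (fun i => s(i, i+1)) '' (({i} : Finset (Fin n)) : Set (Fin n)) := by simp
      rw [himg, delete_set hn3, hG] at hne
      apply hne
      refine onearc_distNum hn3 (s := i + 1) ?_ ?_
      · rw [show i + 1 - 1 = i by ring, mem_univ_sdiff]
        simp
      · intro k hk
        rw [mem_univ_sdiff, Finset.mem_singleton]
        intro h
        have h2 : ((k+1 : ℕ) : Fin n) = 0 := by
          push_cast
          linear_combination h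
        exact cast_nz (n := n) (m := k+1) (by omega) (by omega) h2
    · -- two edges deleted: two arcs
      rintro ⟨F, hsub, hcard, hne⟩
      obtain ⟨e1, e2, hee, rfl⟩ := Set.ncard_eq_two.1 hcard
      have hsub1 := hsub (show e1 ∈ ({e1, e2} : Set (Sym2 (Fin n))) by simp)
      have hsub2 := hsub (show e2 ∈ ({e1, e2} : Set (Sym2 (Fin n))) by simp)
      obtain ⟨i, -, rfl⟩ := arc_edge_mem hn3 hsub1
      obtain ⟨j, -, rfl⟩ := arc_edge_mem hn3 hsub2
      have hij : i ≠ j := fun h => hee (by rw [h])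
      have himg : ({s(i, i+1), s(j, j+1)} : Set (Sym2 (Fin n))) =
          (fun i => s(i, i+1)) '' (({i, j} : Finset (Fin n)) : Set (Fin n)) := by
        rw [Finset.coe_insert, Finset.coe_singleton, Set.image_pair]
      rw [himg, delete_set hn3, hG] at hne
      apply hne
      set a : ℕ := (j - i).val with ha
      have hane : j - i ≠ 0 := sub_ne_zero.2 (Ne.symm hij)
      have ha1 : 1 ≤ a := by
        rcases Nat.eq_zero_or_pos a with h | h
        · exact absurd (Fin.ext (by rw [← ha]; exact h : ((j - i : Fin n)).val = 0)) hane
        · exact h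
      have haln : a < n := (j - i).isLt
      have hA : ((a : ℕ) : Fin n) = j - i := Fin.cast_val_eq_self _
      have hBval : (i - j).val = n - a := by
        have : i - j = -(j - i) := by ring
        rw [this, val_neg_eq hane, ha]
      refine twoarc_distNum (by omega) (s1 := i + 1) (a := a) (b := n - a)
        (by omega) ha1 (by omega) ?_ ?_ ?_ ?_
      · rw [show i + 1 - 1 = i by ring, mem_univ_sdiff]
        simp
      · have : i + 1 + ((a - 1 : ℕ) : Fin n) = j := by
          rw [show ((a-1:ℕ) : Fin n) = ((a:ℕ) : Fin n) - 1 by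
            rw [show a = (a-1)+1 by omega]; push_cast; ring, hA]
          ring
        rw [this, mem_univ_sdiff]
        simp
      · intro k hk
        rw [mem_univ_sdiff, Finset.mem_insert, Finset.mem_singleton]
        push_neg
        constructor
        · intro h
          refine cast_nz (n := n) (m := k+1) (by omega) (by omega) ?_
          push_cast
          linear_combination h
        · intro h
          have hcast : ((k+1 : ℕ) : Fin n) = ((a:ℕ) : Fin n) := by
            push_cast
            rw [hA]
            linear_combination h
          have := fin_cast_inj (n := n) (k := k+1) (l := a) (by omega) (by omega) hcast
          omega
      · intro k hk
        rw [mem_univ_sdiff, Finset.mem_insert, Finset.mem_singleton]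
        push_neg
        have hj1 : i + 1 + ((a:ℕ) : Fin n) = j + 1 := by rw [hA]; ring
        rw [hj1]
        constructor
        · intro h
          have hcast : ((k+1 : ℕ) : Fin n) = ((n - a : ℕ) : Fin n) := by
            rw [show ((n - a : ℕ) : Fin n) = i - j by
              rw [← hBval, Fin.cast_val_eq_self]]
            push_cast
            linear_combination h
          have := fin_cast_inj (n := n) (k := k+1) (l := n - a) (by omega) (by omega) hcast
          omega
        · intro h
          refine cast_nz (n := n) (m := k+1) (by omega) (by omega) ?_
          push_cast
          linear_combination h

end maincycle

section small
variable {n : ℕ} [NeZero n]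

lemma refl_pres (c : Fin n) : ∀ a b : Fin n,
    (arcGraph n Finset.univ).Adj (c - a) (c - b) ↔ (arcGraph n Finset.univ).Adj a b := by
  intro a b
  rw [arc_adj, arc_adj]
  constructor
  · rintro ⟨hne, h | h⟩
    · exact ⟨fun hc => hne (by rw [hc]), Or.inr ⟨Finset.mem_univ _, by linear_combination h.2⟩⟩
    · exact ⟨fun hc => hne (by rw [hc]), Or.inl ⟨Finset.mem_univ _, by linear_combination h.2⟩⟩
  · rintro ⟨hne, h | h⟩
    · exact ⟨fun hc => hne (by linear_combination -hc), Or.inr ⟨Finset.mem_univ _, by linear_combination h.2⟩⟩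
    · exact ⟨fun hc => hne (by linear_combination -hc), Or.inl ⟨Finset.mem_univ _, by linear_combination h.2⟩⟩

lemma fin2_iff_eq : ∀ a b : Fin 2, (a = 0 ↔ b = 0) → a = b := by decide

lemma cycle_small_distNum (hn : 3 ≤ n)
    (hS : ∀ S : Finset (Fin n), ∃ c : Fin n, (∀ z, (c - z ∈ S ↔ z ∈ S)) ∧ ∃ x, c - x ≠ x)
    (h3 : 3 ∈ DSet (arcGraph n Finset.univ)) :
    distNum (arcGraph n Finset.univ) = 3 := by
  haveI : Nonempty (Fin n) := ⟨0⟩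
  refine distNum_eq_of _ 3 h3 ?_
  intro d hd
  interval_cases d
  · exact zero_not_mem_DSet _
  · refine one_not_mem_DSet _ (Equiv.addRight 1) rot_pres 0 ?_
    simp only [Equiv.coe_addRight, zero_add]
    intro hcon
    have : ((1:ℕ) : Fin n) = ((0:ℕ) : Fin n) := by
      rw [Nat.cast_one, Nat.cast_zero, hcon]
    have := fin_cast_inj (n := n) (by omega) (by omega) this
    omega
  · rw [mem_DSet_iff]
    rintro ⟨f, hf⟩
    obtain ⟨c, hc, x, hx⟩ := hS (Finset.univ.filter (fun z => f z = 0))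
    have hinv : Function.Involutive (fun z : Fin n => c - z) := by
      intro z; simp only; ring
    refine hx (hf hinv.toPerm (refl_pres c) ?_ x)
    intro z
    have := hc z
    simp only [Finset.mem_filter, Finset.mem_univ, true_and] at this
    exact fin2_iff_eq _ _ this

lemma cycle_del_one_distNum (hn : 3 ≤ n) (i : Fin n) :
    distNum (arcGraph n (Finset.univ \ {i})) = 2 := by
  refine onearc_distNum hn (s := i + 1) ?_ ?_
  · rw [show i + 1 - 1 = i by ring, mem_univ_sdiff]
    simp
  · intro k hk
    rw [mem_univ_sdiff, Finset.mem_singleton]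
    intro h
    have h2 : ((k+1 : ℕ) : Fin n) = 0 := by
      push_cast
      linear_combination h
    exact cast_nz (n := n) (m := k+1) (by omega) (by omega) h2

lemma TSet_one_cycle {m : ℕ} [NeZero m] (hm : 3 ≤ m)
    (hG3 : distNum (arcGraph m Finset.univ) = 3) :
    1 ∈ TSet (arcGraph m Finset.univ) := by
  refine ⟨(fun i => s(i, i+1)) '' (({0} : Finset (Fin m)) : Set (Fin m)), ?_, ?_, ?_⟩
  · rintro e ⟨i, -, rfl⟩
    exact (SimpleGraph.mem_edgeSet _).2 (adj_self_add_one hm (Finset.mem_univ _))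
  · rw [Set.ncard_image_of_injective _ (arc_edge_inj hm), Set.ncard_coe_finset,
      Finset.card_singleton]
  · rw [delete_set hm, hG3, cycle_del_one_distNum hm 0]
    omega

theorem bD_cycle_small {m : ℕ} [NeZero m] (hm : 3 ≤ m)
    (hG3 : distNum (arcGraph m Finset.univ) = 3) :
    bD (arcGraph m Finset.univ) = 1 := by
  refine bD_eq_of _ 1 (TSet_one_cycle hm hG3) ?_
  intro d hd
  interval_cases d
  exact zero_not_mem_TSet _

lemma distNum_c3 : distNum (arcGraph 3 Finset.univ) = 3 :=
  cycle_small_distNum (by omega) (by decide)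
    ((mem_DSet_iff _ _).2 ⟨![0,1,2], by decide⟩)

set_option maxRecDepth 40000 in
lemma distNum_c4 : distNum (arcGraph 4 Finset.univ) = 3 :=
  cycle_small_distNum (by omega) (by decide)
    ((mem_DSet_iff _ _).2 ⟨![0,1,2,2], by decide⟩)

set_option maxRecDepth 100000 in
set_option maxHeartbeats 1000000 in
lemma distNum_c5 : distNum (arcGraph 5 Finset.univ) = 3 :=
  cycle_small_distNum (by omega) (by decide)
    ((mem_DSet_iff _ _).2 ⟨![0,1,2,2,2], by decide⟩)

theorem bD_c3 : bD (cycleGraph 3) = 1 := by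
  rw [cycle_eq_arc (by omega)]
  exact bD_cycle_small (by omega) distNum_c3

theorem bD_c4 : bD (cycleGraph 4) = 1 := by
  rw [cycle_eq_arc (by omega)]
  exact bD_cycle_small (by omega) distNum_c4

theorem bD_c5 : bD (cycleGraph 5) = 1 := by
  rw [cycle_eq_arc (by omega)]
  exact bD_cycle_small (by omega) distNum_c5

end small

section smallpaths

lemma distNum_dec {m : ℕ} [NeZero m] (E : Finset (Fin m)) (v : ℕ)
    (h1 : ∃ f : Fin m → Fin v, ∀ σ : Equiv.Perm (Fin m),
      (∀ a b, (arcGraph m E).Adj (σ a) (σ b) ↔ (arcGraph m E).Adj a b) →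
      (∀ x, f (σ x) = f x) → ∀ x, σ x = x)
    (h2 : ∀ d, d < v → ¬ ∃ f : Fin m → Fin d, ∀ σ : Equiv.Perm (Fin m),
      (∀ a b, (arcGraph m E).Adj (σ a) (σ b) ↔ (arcGraph m E).Adj a b) →
      (∀ x, f (σ x) = f x) → ∀ x, σ x = x) :
    distNum (arcGraph m E) = v :=
  distNum_eq_of _ v ((mem_DSet_iff _ _).2 h1)
    (fun d hd hm => h2 d hd ((mem_DSet_iff _ _).1 hm))

set_option maxRecDepth 40000 in
theorem bD_p3 : bD (pathGraph 3) = 2 := by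
  rw [path_eq_arc (by omega)]
  have hG := distNum_path (n := 3) (by omega)
  refine bD_eq_of _ 2 ?_ ?_
  · refine ⟨(fun i => s(i, i+1)) '' (({0, 1} : Finset (Fin 3)) : Set (Fin 3)), ?_, ?_, ?_⟩
    · rintro e ⟨i, hi, rfl⟩
      simp only [Finset.coe_insert, Set.mem_insert_iff, Finset.coe_singleton,
        Set.mem_singleton_iff] at hi
      refine (SimpleGraph.mem_edgeSet _).2 (adj_self_add_one (by omega) ?_)
      rcases hi with rfl | rfl <;> decide
    · rw [Set.ncard_image_of_injective _ (arc_edge_inj (by omega)), Set.ncard_coe_finset]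
      decide
    · rw [delete_set (by omega), hG,
        distNum_dec (Epath 3 \ {0, 1}) 3 (by decide) (by decide)]
      omega
  · intro d hd
    interval_cases d
    · exact zero_not_mem_TSet _
    · rintro ⟨F, hsub, hcard, hne⟩
      obtain ⟨e, rfl⟩ := Set.ncard_eq_one.1 hcard
      obtain ⟨i, hiE, rfl⟩ := arc_edge_mem (by omega) (hsub rfl)
      have himg : ({s(i, i+1)} : Set (Sym2 (Fin 3))) =
          (fun i => s(i, i+1)) '' (({i} : Finset (Fin 3)) : Set (Fin 3)) := by simp
      rw [himg, delete_set (by omega), hG] at hne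
      fin_cases i
      · exact hne (distNum_dec _ 2 (by decide) (by decide))
      · exact hne (distNum_dec _ 2 (by decide) (by decide))
      · exact absurd hiE (by decide)

set_option maxRecDepth 100000 in
set_option maxHeartbeats 1000000 in
theorem bD_p4 : bD (pathGraph 4) = 1 := by
  rw [path_eq_arc (by omega)]
  have hG := distNum_path (n := 4) (by omega)
  refine bD_eq_of _ 1 ?_ ?_
  · refine ⟨(fun i => s(i, i+1)) '' (({1} : Finset (Fin 4)) : Set (Fin 4)), ?_, ?_, ?_⟩
    · rintro e ⟨i, hi, rfl⟩
      simp only [Finset.coe_singleton, Set.mem_singleton_iff] at hi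
      subst hi
      exact (SimpleGraph.mem_edgeSet _).2 (adj_self_add_one (by omega) (by decide))
    · rw [Set.ncard_image_of_injective _ (arc_edge_inj (by omega)), Set.ncard_coe_finset,
        Finset.card_singleton]
    · rw [delete_set (by omega), hG,
        distNum_dec (Epath 4 \ {1}) 3 (by decide) (by decide)]
      omega
  · intro d hd
    interval_cases d
    exact zero_not_mem_TSet _

end smallpaths

theorem bD_path_and_cycle' :
    bD (pathGraph 3) = 2 ∧ bD (pathGraph 4) = 1 ∧ (∀ n : ℕ, 5 ≤ n → bD (pathGraph n) = 2) ∧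
      bD (cycleGraph 3) = 1 ∧ bD (cycleGraph 4) = 1 ∧ bD (cycleGraph 5) = 1 ∧
      (∀ n : ℕ, 6 ≤ n → bD (cycleGraph n) = 3) := by
  refine ⟨bD_p3, bD_p4, fun n hn => ?_, bD_c3, bD_c4, bD_c5, fun n hn => ?_⟩
  · haveI : NeZero n := ⟨by omega⟩
    exact bD_path_ge5 hn
  · haveI : NeZero n := ⟨by omega⟩
    exact bD_cycle_ge6 hn

/-- Distinguishing bondage number of paths and cycles. -/
theorem bD_path_and_cycle :
    bD (pathGraph 3) = 2 ∧ bD (pathGraph 4) = 1 ∧ (∀ n : ℕ, 5 ≤ n → bD (pathGraph n) = 2) ∧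
      bD (cycleGraph 3) = 1 ∧ bD (cycleGraph 4) = 1 ∧ bD (cycleGraph 5) = 1 ∧
      (∀ n : ℕ, 6 ≤ n → bD (cycleGraph n) = 3) := bD_path_and_cycle'
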